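/- arXiv:2103.07948 — 3 statements merged into one kernel-verified Lean document; each statement's English description precedes it below -/
import Mathlib

section
/- Let (Ω, ℱ, P) be a probability space, let R : Ω → ℝ be square-integrable and V : Ω → ℝ^m satisfy ‖V‖ = 1 almost surely, with R and V independent. Let Λ be an m×m real matrix, Σ = Λ Λᵀ, μ ∈ ℝ^m, τ > 0, ρ ∈ ℝ, and let μ_v ∈ ℝ^m be a unit vector. Define X = μ + R · (Λ V). If E[V] = ρ μ_v and E[V Vᵀ] = (ρ/τ) I + (1 − (m/τ) ρ) μ_v μ_vᵀ, then Cov[X] = E[R²] (ρ/τ) Σ + (E[R²](1 − (m/τ) ρ) − E[R]² ρ²) · Λ μ_v μ_vᵀ Λᵀ. -/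
/-!
Write `X = μ + Λ (R • V)`. Covariance matrices ignore translations and transform as
`Cov[Λ Z] = Λ Cov[Z] Λᵀ`. Independence of `R` and `V` factors the moments of `Z = R • V`:
`E[Z] = E[R] E[V]` and `E[Z Zᵀ] = E[R²] E[V Vᵀ]`, so
`Cov[Z] = E[R²] E[V Vᵀ] - E[R]² E[V] E[V]ᵀ`, into which the two vMF moments are substituted.
-/

open Matrix MeasureTheory ProbabilityTheory

section RandomVectors

variable {Ω ι κ : Type*} [MeasurableSpace Ω] {P : Measure Ω} {Y : Ω → ι → ℝ}

noncomputable def meanVec (P : Measure Ω) (Y : Ω → ι → ℝ) : ι → ℝ := fun i => ∫ ω, Y ω i ∂P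

noncomputable def secondMomentMatrix (P : Measure Ω) (Y : Ω → ι → ℝ) : Matrix ι ι ℝ :=
  of fun i j => ∫ ω, Y ω i * Y ω j ∂P

noncomputable def covarianceMatrix (P : Measure Ω) (Y : Ω → ι → ℝ) : Matrix ι ι ℝ :=
  of fun i j => cov[(Y · i), (Y · j); P]

theorem covarianceMatrix_eq_sub [IsProbabilityMeasure P] (hY : ∀ i, MemLp (Y · i) 2 P) :
    covarianceMatrix P Y = secondMomentMatrix P Y - vecMulVec (meanVec P Y) (meanVec P Y) := by
  ext i j
  exact covariance_eq_sub (hY i) (hY j)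

theorem covarianceMatrix_const_add [IsProbabilityMeasure P] (hY : ∀ i, MemLp (Y · i) 2 P)
    (μ : ι → ℝ) : covarianceMatrix P (fun ω => μ + Y ω) = covarianceMatrix P Y := by
  ext i j
  exact (covariance_const_add_left ((hY i).integrable one_le_two) _).trans
    (covariance_const_add_right ((hY j).integrable one_le_two) _)

section IndependentScale

variable {R : Ω → ℝ} (hRY : IndepFun R Y P)
include hRY

theorem memLp_two_smul_apply_of_indepFun (hR : MemLp R 2 P) (hY : ∀ i, MemLp (Y · i) 2 P)
    (i : ι) : MemLp (fun ω => (R ω • Y ω) i) 2 P := by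
  refine (memLp_two_iff_integrable_sq (hR.1.mul (hY i).1)).2 ?_
  have hind : IndepFun (fun ω => R ω ^ 2) (fun ω => Y ω i ^ 2) P :=
    hRY.comp (measurable_id.pow_const 2) ((measurable_pi_apply i).pow_const 2)
  simpa only [Pi.mul_def, mul_pow] using
    hind.integrable_mul hR.integrable_sq (hY i).integrable_sq

theorem meanVec_smul_of_indepFun (hR : AEStronglyMeasurable R P)
    (hY : ∀ i, AEStronglyMeasurable (Y · i) P) :
    meanVec P (fun ω => R ω • Y ω) = (∫ ω, R ω ∂P) • meanVec P Y := by
  ext i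
  exact (hRY.comp measurable_id (measurable_pi_apply i)).integral_fun_mul_eq_mul_integral
    hR (hY i)

theorem secondMomentMatrix_smul_of_indepFun (hR : AEStronglyMeasurable R P)
    (hY : ∀ i, AEStronglyMeasurable (Y · i) P) :
    secondMomentMatrix P (fun ω => R ω • Y ω) = (∫ ω, R ω ^ 2 ∂P) • secondMomentMatrix P Y := by
  ext i j
  have hind : IndepFun (fun ω => R ω ^ 2) (fun ω => Y ω i * Y ω j) P :=
    hRY.comp (measurable_id.pow_const 2) ((measurable_pi_apply i).mul (measurable_pi_apply j))
  calc ∫ ω, (R ω • Y ω) i * (R ω • Y ω) j ∂P = ∫ ω, R ω ^ 2 * (Y ω i * Y ω j) ∂P := by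
        congr with ω; simp only [Pi.smul_apply, smul_eq_mul]; ring
    _ = _ := hind.integral_fun_mul_eq_mul_integral (hR.pow 2) ((hY i).mul (hY j))

theorem covarianceMatrix_smul_of_indepFun [IsProbabilityMeasure P] (hR : MemLp R 2 P)
    (hY : ∀ i, MemLp (Y · i) 2 P) :
    covarianceMatrix P (fun ω => R ω • Y ω) =
      (∫ ω, R ω ^ 2 ∂P) • secondMomentMatrix P Y
        - (∫ ω, R ω ∂P) ^ 2 • vecMulVec (meanVec P Y) (meanVec P Y) := by
  rw [covarianceMatrix_eq_sub (memLp_two_smul_apply_of_indepFun hRY hR hY),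
    secondMomentMatrix_smul_of_indepFun hRY hR.1 fun i => (hY i).1,
    meanVec_smul_of_indepFun hRY hR.1 fun i => (hY i).1, vecMulVec_smul, smul_vecMulVec,
    smul_smul, sq]

end IndependentScale

variable [Fintype ι]

theorem memLp_mulVec_apply {p : ENNReal} (hY : ∀ i, MemLp (Y · i) p P) (A : Matrix κ ι ℝ)
    (k : κ) : MemLp (fun ω => (A *ᵥ Y ω) k) p P :=
  memLp_finsetSum _ fun i _ => (hY i).const_mul (A k i)

theorem covarianceMatrix_mulVec [IsFiniteMeasure P] (hY : ∀ i, MemLp (Y · i) 2 P)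
    (A : Matrix κ ι ℝ) :
    covarianceMatrix P (fun ω => A *ᵥ Y ω) = A * covarianceMatrix P Y * Aᵀ := by
  ext k l
  have hAY : ∀ (a : κ) i, MemLp (fun ω => A a i * Y ω i) 2 P := fun a i => (hY i).const_mul _
  simp only [covarianceMatrix, of_apply, mulVec, dotProduct, mul_apply, transpose_apply]
  rw [covariance_fun_sum_fun_sum (hAY k) (hAY l), Finset.sum_comm]
  simp only [covariance_const_mul_left, covariance_const_mul_right, Finset.sum_mul]
  exact Finset.sum_congr rfl fun j _ => Finset.sum_congr rfl fun i _ => by ring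

end RandomVectors

theorem vMF_covariance_closed_form_general
    {m : ℕ} {Ω : Type*} [MeasurableSpace Ω] (P : Measure Ω) [IsProbabilityMeasure P]
    (R : Ω → ℝ) (V : Ω → EuclideanSpace ℝ (Fin m))
    (hR2 : MemLp R 2 P) (hVmeas : Measurable V)
    (hVnorm : ∀ᵐ ω ∂P, ‖V ω‖ = 1)
    (hindep : IndepFun R V P)
    (Λ : Matrix (Fin m) (Fin m) ℝ)
    (Sig : Matrix (Fin m) (Fin m) ℝ) (hSig : Sig = Λ * Λᵀ)
    (μ : Fin m → ℝ) (τ ρ : ℝ)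
    (μv : EuclideanSpace ℝ (Fin m))
    (X : Ω → Fin m → ℝ)
    (hX : ∀ ω, X ω = μ + R ω • Λ.mulVec (V ω))
    (hEV : ∫ ω, V ω ∂P = ρ • μv)
    (hEVV : ∀ i j, ∫ ω, V ω i * V ω j ∂P =
      ((ρ / τ) • (1 : Matrix (Fin m) (Fin m) ℝ)
        + (1 - ((m : ℝ) / τ) * ρ) • Matrix.vecMulVec μv μv) i j) :
    (Matrix.of fun i j =>
        (∫ ω, X ω i * X ω j ∂P) - (∫ ω, X ω i ∂P) * (∫ ω, X ω j ∂P)) =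
      ((∫ ω, (R ω) ^ 2 ∂P) * (ρ / τ)) • Sig
        + ((∫ ω, (R ω) ^ 2 ∂P) * (1 - ((m : ℝ) / τ) * ρ)
            - (∫ ω, R ω ∂P) ^ 2 * ρ ^ 2) • (Λ * Matrix.vecMulVec μv μv * Λᵀ) := by
  set W : Ω → Fin m → ℝ := fun ω => WithLp.ofLp (V ω)
  have hRW : IndepFun R W P := hindep.comp measurable_id (WithLp.measurable_ofLp 2 _)
  have hW : ∀ i, MemLp (W · i) 2 P := fun i =>
    .of_bound ((measurable_pi_apply i).comp
      ((WithLp.measurable_ofLp 2 _).comp hVmeas)).aestronglyMeasurable 1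
      (hVnorm.mono fun ω hω => hω ▸ PiLp.norm_apply_le (V ω) i)
  have hRW2 := memLp_two_smul_apply_of_indepFun hRW hR2 hW
  have hmean : meanVec P W = ρ • WithLp.ofLp μv := by
    ext i
    rw [meanVec, ← eval_integral_piLp (fun i => (hW i).integrable one_le_two), hEV]
    rfl
  have hsecond : secondMomentMatrix P W =
      (ρ / τ) • (1 : Matrix (Fin m) (Fin m) ℝ) + (1 - ((m : ℝ) / τ) * ρ) • vecMulVec μv μv :=
    ext hEVV
  have hXW : X = fun ω => μ + Λ *ᵥ (R ω • W ω) := funext fun ω => by rw [hX, mulVec_smul]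
  subst hXW hSig
  calc _ = covarianceMatrix P (fun ω => μ + Λ *ᵥ (R ω • W ω)) :=
        (covarianceMatrix_eq_sub fun i =>
          (memLp_const (μ i)).add (memLp_mulVec_apply hRW2 Λ i)).symm
    _ = Λ * covarianceMatrix P (fun ω => R ω • W ω) * Λᵀ := by
      rw [covarianceMatrix_const_add (memLp_mulVec_apply hRW2 Λ), covarianceMatrix_mulVec hRW2]
    _ = _ := by
      rw [covarianceMatrix_smul_of_indepFun hRW hR2 hW, hmean, hsecond]
      simp only [Matrix.mul_add, Matrix.add_mul, Matrix.mul_sub, Matrix.sub_mul, Matrix.mul_smul,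
        Matrix.smul_mul, Matrix.mul_one, vecMulVec_smul, smul_vecMulVec]
      module

/-- For `X = μ + R Λ V` with `R` square-integrable, `‖V‖ = 1` a.s.,
`R`, `V` independent, `Σ = Λ Λᵀ`, `τ > 0` and a unit vector `μ_v`, if
`E[V] = ρ μ_v` and `E[V Vᵀ] = (ρ/τ) I + (1 − (m/τ)ρ) μ_v μ_vᵀ`, then
`Cov[X] = E[R²](ρ/τ) Σ + (E[R²](1 − (m/τ)ρ) − E[R]² ρ²) Λ μ_v μ_vᵀ Λᵀ`. -/
theorem vMF_covariance_closed_form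
    {m : ℕ} {Ω : Type*} [MeasurableSpace Ω] (P : Measure Ω) [IsProbabilityMeasure P]
    (R : Ω → ℝ) (V : Ω → EuclideanSpace ℝ (Fin m))
    (hR2 : MemLp R 2 P) (hVmeas : Measurable V)
    (hVnorm : ∀ᵐ ω ∂P, ‖V ω‖ = 1)
    (hindep : IndepFun R V P)
    (Λ : Matrix (Fin m) (Fin m) ℝ)
    (Sig : Matrix (Fin m) (Fin m) ℝ) (hSig : Sig = Λ * Λᵀ)
    (μ : Fin m → ℝ) (τ ρ : ℝ) (hτ : 0 < τ)
    (μv : EuclideanSpace ℝ (Fin m)) (hμv : ‖μv‖ = 1)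
    (X : Ω → Fin m → ℝ)
    (hX : ∀ ω, X ω = μ + R ω • Λ.mulVec (V ω))
    (hEV : ∫ ω, V ω ∂P = ρ • μv)
    (hEVV : ∀ i j, ∫ ω, V ω i * V ω j ∂P =
      ((ρ / τ) • (1 : Matrix (Fin m) (Fin m) ℝ)
        + (1 - ((m : ℝ) / τ) * ρ) • Matrix.vecMulVec μv μv) i j) :
    (Matrix.of fun i j =>
        (∫ ω, X ω i * X ω j ∂P) - (∫ ω, X ω i ∂P) * (∫ ω, X ω j ∂P)) =
      ((∫ ω, (R ω) ^ 2 ∂P) * (ρ / τ)) • Sig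
        + ((∫ ω, (R ω) ^ 2 ∂P) * (1 - ((m : ℝ) / τ) * ρ)
            - (∫ ω, R ω ∂P) ^ 2 * ρ ^ 2) • (Λ * Matrix.vecMulVec μv μv * Λᵀ) :=
  vMF_covariance_closed_form_general P R V hR2 hVmeas hVnorm hindep Λ Sig hSig μ τ ρ μv X hX hEV
    hEVV
end

section
/- Let Σ be a symmetric positive-definite m×m real matrix with positive-definite square root Σ^{1/2}, let v ∈ ℝ^m, let x₁, …, x_n ∈ ℝ^m, and let g : (0, ∞) → (0, ∞) be differentiable with ψ(t) = g'(t)/g(t). For μ ∈ ℝ^m write tᵢ(μ) = (xᵢ − μ)ᵀ Σ⁻¹ (xᵢ − μ) and zᵢ(μ) = Σ^{−1/2}(xᵢ − μ)/√(tᵢ(μ)). Then at every μ with tᵢ(μ) > 0 for all i, the function L(μ) = Σᵢ (vᵀ zᵢ(μ) + log g(tᵢ(μ))) is differentiable, and its gradient equals Σᵢ ( −Σ^{−1/2} v / √(tᵢ(μ)) + (vᵀ zᵢ(μ) / tᵢ(μ)) Σ⁻¹(xᵢ − μ) − 2 ψ(tᵢ(μ)) Σ⁻¹(xᵢ − μ)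 ). -/
/-!
Since `S⁻¹` is symmetric, `vᵀ zᵢ = ⟪S⁻¹ v, xᵢ - μ⟫ / √tᵢ`, so every summand is assembled from the
affine form `μ ↦ ⟪u, xᵢ - μ⟫` (gradient `-u`) and the quadratic form `tᵢ`, whose gradient is
`-2 Σ⁻¹ (xᵢ - μ)` because `Σ⁻¹` is symmetric. The product and chain rules for gradients, with
`(t^{-1/2})' = -t^{-1/2} / (2t)` and `(log ∘ g)' = ψ`, then produce the stated formula.
-/

open Matrix InnerProductSpace
open scoped RealInnerProductSpace

section GradientCalculus

variable {F : Type*} [NormedAddCommGroup F] [InnerProductSpace ℝ F] [CompleteSpace F]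
  {f g : F → ℝ} {f' g' x : F}

theorem HasGradientAt.add (hf : HasGradientAt f f' x) (hg : HasGradientAt g g' x) :
    HasGradientAt (fun y => f y + g y) (f' + g') x := by
  rw [hasGradientAt_iff_hasFDerivAt] at *
  rw [map_add]
  exact hf.add hg

theorem HasGradientAt.mul (hf : HasGradientAt f f' x) (hg : HasGradientAt g g' x) :
    HasGradientAt (fun y => f y * g y) (f x • g' + g x • f') x := by
  rw [hasGradientAt_iff_hasFDerivAt] at *
  rw [map_add, map_smul, map_smul]
  exact hf.mul hg

theorem HasGradientAt.sum {ι : Type*} {s : Finset ι} {f : ι → F → ℝ} {f' : ι → F}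
    (h : ∀ i ∈ s, HasGradientAt (f i) (f' i) x) :
    HasGradientAt (fun y => ∑ i ∈ s, f i y) (∑ i ∈ s, f' i) x := by
  rw [hasGradientAt_iff_hasFDerivAt, map_sum]
  exact HasFDerivAt.fun_sum fun i hi => hasGradientAt_iff_hasFDerivAt.mp (h i hi)

theorem HasDerivAt.comp_hasGradientAt {h : ℝ → ℝ} {h' : ℝ} (hh : HasDerivAt h h' (f x))
    (hf : HasGradientAt f f' x) : HasGradientAt (fun y => h (f y)) (h' • f') x := by
  rw [hasGradientAt_iff_hasFDerivAt] at *
  rw [map_smul]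
  exact hh.comp_hasFDerivAt x hf

theorem hasGradientAt_inner_sub (a x y : F) : HasGradientAt (fun z => ⟪a, x - z⟫) (-a) y := by
  rw [hasGradientAt_iff_hasFDerivAt]
  have := ((innerSL ℝ a).hasFDerivAt (x := x - y)).comp y ((hasFDerivAt_id (𝕜 := ℝ) y).const_sub x)
  refine this.congr_fderiv ?_
  ext h
  simp

theorem hasGradientAt_inner_sub_apply_sub {T : F →L[ℝ] F} (hT : IsSelfAdjoint T) (x y : F) :
    HasGradientAt (fun z => ⟪x - z, T (x - z)⟫) (-(2 : ℝ) • T (x - y)) y := by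
  rw [hasGradientAt_iff_hasFDerivAt]
  have hsub := (hasFDerivAt_id (𝕜 := ℝ) y).const_sub x
  refine (hsub.inner ℝ ((T.hasFDerivAt).comp y hsub)).congr_fderiv ?_
  ext h
  have hsymm : ⟪x - y, T h⟫ = ⟪T (x - y), h⟫ := (hT.isSymmetric _ _).symm
  simp only [id_eq, Function.comp_apply, map_sub, ContinuousLinearMap.comp_neg,
    ContinuousLinearMap.comp_id, ContinuousLinearMap.comp_apply, ContinuousLinearMap.prod_apply,
    _root_.neg_apply, ContinuousLinearMap.id_apply, fderivInnerCLM_apply,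
    inner_neg_right, hsymm, real_inner_comm h, inner_sub_right, neg_sub, inner_neg_left,
    sub_neg_eq_add, neg_smul, map_neg, map_smul, _root_.smul_apply,
    _root_.sub_apply, toDual_apply_apply, smul_eq_mul]
  ring

end GradientCalculus

theorem Real.hasDerivAt_inv_sqrt {t : ℝ} (ht : 0 < t) :
    HasDerivAt (fun s => (√s)⁻¹) (-(√t)⁻¹ / (2 * t)) t := by
  refine ((Real.hasDerivAt_sqrt ht.ne').inv (Real.sqrt_pos.2 ht).ne').congr_deriv ?_
  rw [Real.sq_sqrt ht.le]
  field_simp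

theorem Matrix.IsHermitian.dotProduct_mulVec_eq_inner {ι : Type*} [Fintype ι] [DecidableEq ι]
    {A : Matrix ι ι ℝ} (hA : A.IsHermitian) (a b : EuclideanSpace ℝ ι) :
    a ⬝ᵥ A *ᵥ b = ⟪WithLp.toLp 2 (A *ᵥ a), b⟫ := by
  rw [← inner_toEuclideanCLM, ← toEuclideanCLM_toLp, WithLp.toLp_ofLp]
  exact ((hA.isSelfAdjoint.map (toEuclideanCLM (𝕜 := ℝ))).isSymmetric _ _).symm

theorem vMF_loglikelihood_gradient_general
    {m n : ℕ}
    (Sig S : Matrix (Fin m) (Fin m) ℝ)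
    (hSig : Sig.PosDef) (hS : S.PosDef)
    (v : EuclideanSpace ℝ (Fin m)) (x : Fin n → EuclideanSpace ℝ (Fin m))
    (g g' : ℝ → ℝ)
    (hgpos : ∀ s > (0 : ℝ), 0 < g s)
    (hg' : ∀ s > (0 : ℝ), HasDerivAt g (g' s) s)
    (ψ : ℝ → ℝ) (hψ : ∀ s > (0 : ℝ), ψ s = g' s / g s)
    (t : EuclideanSpace ℝ (Fin m) → Fin n → ℝ)
    (ht : ∀ μ i, t μ i = (x i - μ) ⬝ᵥ Sig⁻¹.mulVec (x i - μ))
    (z : EuclideanSpace ℝ (Fin m) → Fin n → EuclideanSpace ℝ (Fin m))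
    (hz : ∀ μ i, z μ i =
      (Real.sqrt (t μ i))⁻¹ • (WithLp.toLp 2 (S⁻¹.mulVec (x i - μ)) : EuclideanSpace ℝ (Fin m)))
    (w : EuclideanSpace ℝ (Fin m) → Fin n → EuclideanSpace ℝ (Fin m))
    (hw : ∀ μ i, w μ i = (WithLp.toLp 2 (Sig⁻¹.mulVec (x i - μ)) : EuclideanSpace ℝ (Fin m)))
    (u : EuclideanSpace ℝ (Fin m)) (hu : u = (WithLp.toLp 2 (S⁻¹.mulVec v) : EuclideanSpace ℝ (Fin m)))
    (L : EuclideanSpace ℝ (Fin m) → ℝ)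
    (hL : ∀ μ, L μ = ∑ i, (v ⬝ᵥ (z μ i : Fin m → ℝ) + Real.log (g (t μ i)))) :
    ∀ μ : EuclideanSpace ℝ (Fin m), (∀ i, 0 < t μ i) →
      HasGradientAt L
        (∑ i, (-(Real.sqrt (t μ i))⁻¹ • u
          + ((v ⬝ᵥ (z μ i : Fin m → ℝ)) / t μ i) • w μ i
          - (2 * ψ (t μ i)) • w μ i)) μ := by
  intro μ hpos
  simp only [← WithLp.ofLp_sub] at ht hz hw
  set T := toEuclideanCLM (𝕜 := ℝ) Sig⁻¹
  have hT : IsSelfAdjoint T := hSig.isHermitian.inv.isSelfAdjoint.map _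
  have ht' : ∀ μ i, t μ i = ⟪x i - μ, T (x i - μ)⟫ := fun μ i => by
    rw [ht, inner_toEuclideanCLM]
  have hw' : ∀ i, w μ i = T (x i - μ) := fun i => by
    rw [hw, ← toEuclideanCLM_toLp, WithLp.toLp_ofLp]
  have hvz : ∀ μ i, v ⬝ᵥ (z μ i : Fin m → ℝ) = (√(t μ i))⁻¹ * ⟪u, x i - μ⟫ := fun μ i => by
    rw [hz, WithLp.ofLp_smul, dotProduct_smul, hS.isHermitian.inv.dotProduct_mulVec_eq_inner, ← hu,
      smul_eq_mul]
  have hL' : L = fun μ => ∑ i, ((√(t μ i))⁻¹ * ⟪u, x i - μ⟫ + Real.log (g (t μ i))) :=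
    funext fun μ => by simp only [hL, hvz]
  rw [hL']
  refine HasGradientAt.sum fun i _ => ?_
  have hti := hpos i
  have hq : HasGradientAt (fun μ => t μ i) (-(2 : ℝ) • w μ i) μ := by
    simp only [ht', hw']
    exact hasGradientAt_inner_sub_apply_sub hT (x i) μ
  convert (((Real.hasDerivAt_inv_sqrt hti).comp_hasGradientAt (f := fun μ => t μ i) hq).mul
    (hasGradientAt_inner_sub u (x i) μ)).add
    (((hg' _ hti).log (hgpos _ hti).ne').comp_hasGradientAt (f := fun μ => t μ i) hq) using 1
  rw [hvz, hψ _ hti]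
  module

/-- The μ-dependent part of the vMF elliptical log-likelihood,
`L(μ) = Σᵢ (vᵀ zᵢ(μ) + log g(tᵢ(μ)))`, is differentiable at every `μ` with all
`tᵢ(μ) > 0`, with gradient
`Σᵢ ( −Σ^{−1/2} v / √tᵢ + (vᵀ zᵢ / tᵢ) Σ⁻¹(xᵢ − μ) − 2 ψ(tᵢ) Σ⁻¹(xᵢ − μ) )`. -/
theorem vMF_loglikelihood_gradient
    {m n : ℕ}
    (Sig S : Matrix (Fin m) (Fin m) ℝ)
    (hSig : Sig.PosDef) (hS : S.PosDef) (hSsq : S * S = Sig)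
    (v : EuclideanSpace ℝ (Fin m)) (x : Fin n → EuclideanSpace ℝ (Fin m))
    (g g' : ℝ → ℝ)
    (hgpos : ∀ s > (0 : ℝ), 0 < g s)
    (hg' : ∀ s > (0 : ℝ), HasDerivAt g (g' s) s)
    (ψ : ℝ → ℝ) (hψ : ∀ s > (0 : ℝ), ψ s = g' s / g s)
    (t : EuclideanSpace ℝ (Fin m) → Fin n → ℝ)
    (ht : ∀ μ i, t μ i = (x i - μ) ⬝ᵥ Sig⁻¹.mulVec (x i - μ))
    (z : EuclideanSpace ℝ (Fin m) → Fin n → EuclideanSpace ℝ (Fin m))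
    (hz : ∀ μ i, z μ i =
      (Real.sqrt (t μ i))⁻¹ • (WithLp.toLp 2 (S⁻¹.mulVec (x i - μ)) : EuclideanSpace ℝ (Fin m)))
    (w : EuclideanSpace ℝ (Fin m) → Fin n → EuclideanSpace ℝ (Fin m))
    (hw : ∀ μ i, w μ i = (WithLp.toLp 2 (Sig⁻¹.mulVec (x i - μ)) : EuclideanSpace ℝ (Fin m)))
    (u : EuclideanSpace ℝ (Fin m)) (hu : u = (WithLp.toLp 2 (S⁻¹.mulVec v) : EuclideanSpace ℝ (Fin m)))
    (L : EuclideanSpace ℝ (Fin m) → ℝ)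
    (hL : ∀ μ, L μ = ∑ i, (v ⬝ᵥ (z μ i : Fin m → ℝ) + Real.log (g (t μ i)))) :
    ∀ μ : EuclideanSpace ℝ (Fin m), (∀ i, 0 < t μ i) →
      HasGradientAt L
        (∑ i, (-(Real.sqrt (t μ i))⁻¹ • u
          + ((v ⬝ᵥ (z μ i : Fin m → ℝ)) / t μ i) • w μ i
          - (2 * ψ (t μ i)) • w μ i)) μ :=
  vMF_loglikelihood_gradient_general Sig S hSig hS v x g g' hgpos hg' ψ hψ t ht z hz w hw u hu L hL
end

section
/- Let Σ be a symmetric positive-definite m×m real matrix with positive-definite square root Σ^{1/2}, let v ∈ ℝ^m, let x₁, …, x_n ∈ ℝ^m, let ψ : (0, ∞) → ℝ, and let μ ∈ ℝ^m be such that tᵢ := (xᵢ − μ)ᵀ Σ⁻¹ (xᵢ − μ) > 0 for all i, with zᵢ := Σ^{−1/2}(xᵢ − μ)/√tᵢ. Suppose the stationarity equation Σᵢ ( −Σ^{−1/2} v / √tᵢ + (vᵀ zᵢ / tᵢ) Σ⁻¹(xᵢ − μ) − 2 ψ(tᵢ) Σ⁻¹(xᵢ − μ) ) = 0 holds and that Σᵢ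 (vᵀ zᵢ / tᵢ − 2 ψ(tᵢ)) ≠ 0. Then μ = ( Σᵢ ( (vᵀ zᵢ / tᵢ − 2 ψ(tᵢ)) xᵢ − (1/√tᵢ) Σ^{1/2} v ) ) / ( Σᵢ (vᵀ zᵢ / tᵢ − 2 ψ(tᵢ)) ). -/
open Matrix

/-- If the stationarity equation (vanishing gradient of the vMF
elliptical log-likelihood w.r.t. `μ`) holds and `Σᵢ (vᵀzᵢ/tᵢ − 2ψ(tᵢ)) ≠ 0`, then
`μ = (Σᵢ ((vᵀzᵢ/tᵢ − 2ψ(tᵢ)) xᵢ − Σ^{1/2} v / √tᵢ)) / (Σᵢ (vᵀzᵢ/tᵢ − 2ψ(tᵢ)))`. -/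
theorem vMF_location_estimate
    {m n : ℕ}
    (Sig S : Matrix (Fin m) (Fin m) ℝ)
    (hSig : Sig.PosDef) (hS : S.PosDef) (hSsq : S * S = Sig)
    (v : Fin m → ℝ) (x : Fin n → Fin m → ℝ)
    (ψ : ℝ → ℝ) (μ : Fin m → ℝ)
    (t : Fin n → ℝ)
    (ht : ∀ i, t i = (x i - μ) ⬝ᵥ Sig⁻¹.mulVec (x i - μ))
    (htpos : ∀ i, 0 < t i)
    (z : Fin n → Fin m → ℝ)
    (hz : ∀ i, z i = (Real.sqrt (t i))⁻¹ • S⁻¹.mulVec (x i - μ))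
    (hstat : ∑ i, (-(Real.sqrt (t i))⁻¹ • S⁻¹.mulVec v
        + ((v ⬝ᵥ z i) / t i) • Sig⁻¹.mulVec (x i - μ)
        - (2 * ψ (t i)) • Sig⁻¹.mulVec (x i - μ)) = 0)
    (hden : ∑ i, ((v ⬝ᵥ z i) / t i - 2 * ψ (t i)) ≠ 0) :
    μ = (∑ i, ((v ⬝ᵥ z i) / t i - 2 * ψ (t i)))⁻¹ •
        ∑ i, (((v ⬝ᵥ z i) / t i - 2 * ψ (t i)) • x i
          - (Real.sqrt (t i))⁻¹ • S.mulVec v) := by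
  set c : Fin n → ℝ := fun i => (v ⬝ᵥ z i) / t i - 2 * ψ (t i) with hc
  have hSdet : IsUnit S.det := isUnit_iff_ne_zero.mpr hS.det_pos.ne'
  have hSigdet : IsUnit Sig.det := isUnit_iff_ne_zero.mpr hSig.det_pos.ne'
  have hSinv : Sig * S⁻¹ = S := by
    rw [← hSsq, Matrix.mul_assoc, Matrix.mul_nonsing_inv S hSdet, Matrix.mul_one]
  have hSiginv : Sig * Sig⁻¹ = 1 := Matrix.mul_nonsing_inv Sig hSigdet
  have key : ∑ i, (-(Real.sqrt (t i))⁻¹ • S.mulVec v + c i • (x i - μ)) = 0 := by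
    have h1 := congrArg Sig.mulVec hstat
    rw [Matrix.mulVec_zero] at h1
    rw [← h1]
    rw [← Sig.mulVecLin_apply, map_sum]
    refine Finset.sum_congr rfl fun i _ => ?_
    simp only [Matrix.mulVecLin_apply, Matrix.mulVec_add, Matrix.mulVec_sub,
      Matrix.mulVec_smul, Matrix.mulVec_mulVec, hSinv, hSiginv, Matrix.one_mulVec]
    rw [hc]
    module
  have key2 : (∑ i, c i) • μ = ∑ i, (c i • x i - (Real.sqrt (t i))⁻¹ • S.mulVec v) := by
    have h : ∑ i, (c i • x i - (Real.sqrt (t i))⁻¹ • S.mulVec v) - ∑ i, c i • μ = 0 := by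
      rw [← Finset.sum_sub_distrib, ← key]
      refine Finset.sum_congr rfl fun i _ => ?_
      module
    rw [Finset.sum_smul]
    exact (sub_eq_zero.mp h).symm
  rw [← key2, smul_smul, inv_mul_cancel₀ hden, one_smul]
end
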